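/- Let o_n denote the number of independent dominating sets of the ortho-chain hexagonal cactus O_n. Then o_1 = 5, o_2 = 19, and for every n ≥ 3, o_n = 3o_{n-1} + 3o_{n-2}. -/

import Mathlib

/-- `S` is an independent dominating set of `G`: pairwise non-adjacent, and every
vertex outside `S` has a neighbour in `S`. -/
def IsIndepDomSet {V : Type*} (G : SimpleGraph V) (S : Finset V) : Prop :=
  (∀ v ∈ S, ∀ w ∈ S, ¬ G.Adj v w) ∧ ∀ v, v ∉ S → ∃ w ∈ S, G.Adj v w

/-- The ortho-chain hexagonal cactus `O n`: `Sum.inl i` is the cut vertex `x i`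
(`0 ≤ i ≤ n`) and `Sum.inr (k, t)` for `t = 0, 1, 2, 3` is `a (k+1)`, `b (k+1)`,
`c (k+1)`, `d (k+1)` respectively (`0 ≤ k ≤ n-1`); the `i`-th hexagon
(`1 ≤ i ≤ n`) is the six-cycle `x (i-1) – x i – a i – b i – c i – d i – x (i-1)`. -/
def orthoHex (n : ℕ) : SimpleGraph (Fin (n + 1) ⊕ Fin n × Fin 4) :=
  SimpleGraph.fromRel fun p q =>
    match p, q with
    | Sum.inl i, Sum.inl j => (i : ℕ) + 1 = (j : ℕ)
    | Sum.inl i, Sum.inr (k, t) =>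
        ((i : ℕ) = (k : ℕ) + 1 ∧ t = 0) ∨ ((i : ℕ) = (k : ℕ) ∧ t = 3)
    | Sum.inr (k, t), Sum.inr (k', t') =>
        k = k' ∧ ((t = 0 ∧ t' = 1) ∨ (t = 1 ∧ t' = 2) ∨ (t = 2 ∧ t' = 3))
    | _, _ => False

/-- The number of independent dominating sets of the ortho-chain hexagonal cactus `O n`. -/
noncomputable def numIDSOrthoHex (n : ℕ) : ℕ :=
  Nat.card {S : Finset (Fin (n + 1) ⊕ Fin n × Fin 4) // IsIndepDomSet (orthoHex n) S}

/-!
Scan the hexagons from left to right. A vertex set is independent dominating iff each vertex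
lies in it exactly when none of its neighbours does. This condition is local to one hexagon once
we remember, at its left cut vertex, whether that vertex lies in the set and whether it already
has a neighbour in the set in the previous hexagon. So the cut vertex is in the set, dominated,
or not yet dominated, and counting the admissible fillings of one hexagon between two such
states gives the transfer matrix `[[0, 2, 2], [2, 2, 1], [0, 1, 1]]` (rows: new state), whose
characteristic polynomial is `x³ - 3x² - 3x`. As `o n` counts the configurations ending in the
first two states, Cayley–Hamilton gives `o (n + 3) = 3 o (n + 2) + 3 o (n + 1)`.
-/

open Finset

theorem isIndepDomSet_iff_forall_mem_iff {V : Type*} (G : SimpleGraph V) (S : Finset V) :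
    IsIndepDomSet G S ↔ ∀ v, v ∈ S ↔ ¬∃ w ∈ S, G.Adj v w := by
  refine ⟨fun ⟨hind, hdom⟩ v => ⟨fun hv ⟨w, hw, hvw⟩ => hind v hv w hw hvw,
      fun hv => Classical.byContradiction fun hvS => hv (hdom v hvS)⟩,
    fun h => ⟨fun v hv w hw hvw => (h v).1 hv ⟨w, hw, hvw⟩,
      fun v hv => Classical.byContradiction fun hnone => hv ((h v).2 hnone)⟩⟩

theorem card_filter_prod_eq_sum_card_mul_card {α β σ : Type*} [Fintype α] [Fintype β]
    [Fintype σ] [DecidableEq σ] (P : α → Prop) [DecidablePred P] (f : α → σ)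
    (Q : σ → β → Prop) [∀ s, DecidablePred (Q s)] :
    #{x : α × β | P x.1 ∧ Q (f x.1) x.2} = ∑ s, #{a | P a ∧ f a = s} * #{b | Q s b} := by
  rw [card_eq_sum_card_fiberwise (f := f ∘ Prod.fst) (t := univ)
    (fun _ _ => mem_coe.2 (mem_univ _))]
  refine sum_congr rfl fun s _ => ?_
  rw [← card_product, ← univ_product_univ, ← filter_product, filter_filter]
  congr 1
  refine filter_congr fun x _ => ?_
  simp only [Function.comp_apply]
  constructor
  · rintro ⟨⟨hP, hQ⟩, rfl⟩; exact ⟨⟨hP, rfl⟩, hQ⟩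
  · rintro ⟨⟨hP, rfl⟩, hQ⟩; exact ⟨⟨hP, hQ⟩, rfl⟩

namespace OrthoHex

abbrev Vertex (n : ℕ) := Fin (n + 1) ⊕ Fin n × Fin 4

variable {n : ℕ}

theorem adj_inr_zero (k : Fin n) (w : Vertex n) :
    (orthoHex n).Adj (.inr (k, 0)) w ↔ w = .inl k.succ ∨ w = .inr (k, 1) := by
  cases w <;> simp [orthoHex, SimpleGraph.fromRel_adj] <;> grind [Fin.ext_iff]

theorem adj_inr_one (k : Fin n) (w : Vertex n) :
    (orthoHex n).Adj (.inr (k, 1)) w ↔ w = .inr (k, 0) ∨ w = .inr (k, 2) := by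
  cases w <;> simp [orthoHex, SimpleGraph.fromRel_adj]
  grind

theorem adj_inr_two (k : Fin n) (w : Vertex n) :
    (orthoHex n).Adj (.inr (k, 2)) w ↔ w = .inr (k, 1) ∨ w = .inr (k, 3) := by
  cases w <;> simp [orthoHex, SimpleGraph.fromRel_adj]
  grind

theorem adj_inr_three (k : Fin n) (w : Vertex n) :
    (orthoHex n).Adj (.inr (k, 3)) w ↔ w = .inr (k, 2) ∨ w = .inl k.castSucc := by
  cases w <;> simp [orthoHex, SimpleGraph.fromRel_adj] <;> grind [Fin.ext_iff]

theorem adj_inl (i : Fin (n + 1)) (w : Vertex n) :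
    (orthoHex n).Adj (.inl i) w ↔
      (∃ k : Fin n, k.succ = i ∧ (w = .inl k.castSucc ∨ w = .inr (k, 0))) ∨
      (∃ k : Fin n, k.castSucc = i ∧ (w = .inl k.succ ∨ w = .inr (k, 3))) := by
  rcases w with j | ⟨k, t⟩ <;> simp [orthoHex, SimpleGraph.fromRel_adj]
  · constructor
    · rintro ⟨-, h | h⟩
      · exact .inr ⟨⟨i, by omega⟩, rfl, Fin.ext h.symm⟩
      · exact .inl ⟨⟨j, by omega⟩, Fin.ext h, rfl⟩
    · rintro (⟨k, rfl, rfl⟩ | ⟨k, rfl, rfl⟩) <;> simp [Fin.ext_iff]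
  · grind [Fin.ext_iff]

abbrev Config (n : ℕ) := (Fin (n + 1) → Bool) × (Fin n → Fin 4 → Bool)

abbrev Hexagon := (Fin 4 → Bool) × Bool

def configEquiv (n : ℕ) : Finset (Vertex n) ≃ Config n where
  toFun S := (fun i => decide (.inl i ∈ S), fun k t => decide (.inr (k, t) ∈ S))
  invFun p := {v | Sum.elim p.1 (fun kt => p.2 kt.1 kt.2) v}
  left_inv S := by ext (i | ⟨k, t⟩) <;> simp
  right_inv p := by ext <;> simp

-- Whether `x i` has a neighbour in the set in the hexagon to its left, resp. right.
def leftNbr (p : Config n) : Fin (n + 1) → Bool :=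
  Fin.cases false fun k => p.1 k.castSucc || p.2 k 0

def rightNbr (p : Config n) : Fin (n + 1) → Bool :=
  Fin.lastCases false fun k => p.1 k.succ || p.2 k 3

def innerNbr (xl xr : Bool) (t : Fin 4 → Bool) : Fin 4 → Bool :=
  ![xr || t 1, t 0 || t 2, t 1 || t 3, t 2 || xl]

/- `s` records `x k ∈ S` and `leftNbr k`, and `c` records the inner vertices `a, b, c, d` of the
hexagon from `x k` to `x (k + 1)` and then `x (k + 1) ∈ S`: the rule "in `S` iff no neighbour in
`S`" at these four inner vertices and at `x k`. -/
def IsGoodHexagon (s : Bool × Bool) (c : Hexagon) : Prop :=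
  (∀ j, c.1 j = !innerNbr s.1 c.2 c.1 j) ∧ s.1 = !(s.2 || (c.2 || c.1 3))

def IsAdmissible (p : Config n) : Prop :=
  ∀ k : Fin n, IsGoodHexagon (p.1 k.castSucc, leftNbr p k.castSucc) (p.2 k, p.1 k.succ)

instance (s : Bool × Bool) (c : Hexagon) : Decidable (IsGoodHexagon s c) :=
  inferInstanceAs (Decidable (_ ∧ _))

instance (p : Config n) : Decidable (IsAdmissible p) :=
  inferInstanceAs (Decidable (∀ _, _))

theorem leftNbr_configEquiv_eq_true_iff (S : Finset (Vertex n)) (i : Fin (n + 1)) :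
    leftNbr (configEquiv n S) i = true ↔
      ∃ k : Fin n, k.succ = i ∧ (.inl k.castSucc ∈ S ∨ .inr (k, 0) ∈ S) := by
  cases i using Fin.cases <;> simp [leftNbr, configEquiv]

theorem rightNbr_configEquiv_eq_true_iff (S : Finset (Vertex n)) (i : Fin (n + 1)) :
    rightNbr (configEquiv n S) i = true ↔
      ∃ k : Fin n, k.castSucc = i ∧ (.inl k.succ ∈ S ∨ .inr (k, 3) ∈ S) := by
  cases i using Fin.lastCases <;> simp [rightNbr, configEquiv]

theorem exists_mem_adj_inl_iff (S : Finset (Vertex n)) (i : Fin (n + 1)) :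
    (∃ w ∈ S, (orthoHex n).Adj (.inl i) w) ↔
      (leftNbr (configEquiv n S) i || rightNbr (configEquiv n S) i) = true := by
  simp only [adj_inl, Bool.or_eq_true, leftNbr_configEquiv_eq_true_iff,
    rightNbr_configEquiv_eq_true_iff]
  aesop

theorem exists_mem_adj_inr_iff (S : Finset (Vertex n)) (k : Fin n) (t : Fin 4) :
    (∃ w ∈ S, (orthoHex n).Adj (.inr (k, t)) w) ↔
      innerNbr ((configEquiv n S).1 k.castSucc) ((configEquiv n S).1 k.succ)
        ((configEquiv n S).2 k) t = true := by
  fin_cases t <;> simp [adj_inr_zero, adj_inr_one, adj_inr_two, adj_inr_three, innerNbr,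
    configEquiv, -Sum.exists, and_or_left, exists_or]

theorem isIndepDomSet_orthoHex_iff (S : Finset (Vertex n)) :
    IsIndepDomSet (orthoHex n) S ↔ IsAdmissible (configEquiv n S) ∧
      (configEquiv n S).1 (Fin.last n) = !leftNbr (configEquiv n S) (Fin.last n) := by
  have hiff : ∀ {P Q : Prop} [Decidable P] {b : Bool},
      (Q ↔ b = true) → ((P ↔ ¬Q) ↔ decide P = !b) := by
    intro P Q _ b h
    cases b <;> simp_all
  set p := configEquiv n S
  have hx : ∀ i, (.inl i ∈ S ↔ ¬∃ w ∈ S, (orthoHex n).Adj (.inl i) w) ↔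
      p.1 i = !(leftNbr p i || rightNbr p i) :=
    fun i => hiff (exists_mem_adj_inl_iff S i)
  have ht : ∀ k t, (.inr (k, t) ∈ S ↔ ¬∃ w ∈ S, (orthoHex n).Adj (.inr (k, t)) w) ↔
      p.2 k t = !innerNbr (p.1 k.castSucc) (p.1 k.succ) (p.2 k) t :=
    fun k t => hiff (exists_mem_adj_inr_iff S k t)
  rw [isIndepDomSet_iff_forall_mem_iff, Sum.forall, Prod.forall, Fin.forall_fin_succ']
  simp only [hx, ht, IsAdmissible, IsGoodHexagon, rightNbr, Fin.lastCases_castSucc,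
    Fin.lastCases_last, Bool.or_false, forall_and]
  tauto

-- Only `(true, false)`, `(false, true)`, `(false, false)` occur: `x n` is in the set,
-- dominated from the left, or not yet dominated.
def state (p : Config n) : Bool × Bool :=
  (p.1 (Fin.last n), leftNbr p (Fin.last n))

def nextState (s : Bool × Bool) (c : Hexagon) : Bool × Bool :=
  (c.2, s.1 || c.1 0)

def count (n : ℕ) (s : Bool × Bool) : ℕ :=
  #{p : Config n | IsAdmissible p ∧ state p = s}

def snocEquiv (n : ℕ) : Config n × Hexagon ≃ Config (n + 1) where
  toFun pc := (Fin.snoc pc.1.1 pc.2.2, Fin.snoc pc.1.2 pc.2.1)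
  invFun q := ((Fin.init q.1, Fin.init q.2), (q.2 (Fin.last n), q.1 (Fin.last (n + 1))))
  left_inv pc := by simp
  right_inv q := by simp

theorem leftNbr_snocEquiv_castSucc (pc : Config n × Hexagon) (i : Fin (n + 1)) :
    leftNbr (snocEquiv n pc) i.castSucc = leftNbr pc.1 i := by
  cases i using Fin.cases <;> simp [leftNbr, snocEquiv]

theorem leftNbr_last (p : Config (n + 1)) :
    leftNbr p (Fin.last (n + 1)) = (p.1 (Fin.last n).castSucc || p.2 (Fin.last n) 0) :=
  rfl

theorem state_snocEquiv (pc : Config n × Hexagon) :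
    state (snocEquiv n pc) = nextState (state pc.1) pc.2 := by
  simp [state, nextState, leftNbr_last, snocEquiv]

theorem isAdmissible_snocEquiv (pc : Config n × Hexagon) :
    IsAdmissible (snocEquiv n pc) ↔ IsAdmissible pc.1 ∧ IsGoodHexagon (state pc.1) pc.2 := by
  rw [IsAdmissible, Fin.forall_fin_succ']
  simp only [leftNbr_snocEquiv_castSucc]
  simp only [snocEquiv, Equiv.coe_fn_mk, Fin.succ_castSucc, Fin.snoc_castSucc, Fin.succ_last,
    Fin.snoc_last]
  rfl

def transfer (s s' : Bool × Bool) : ℕ :=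
  #{c : Hexagon | IsGoodHexagon s c ∧ nextState s c = s'}

theorem count_succ (n : ℕ) (s' : Bool × Bool) :
    count (n + 1) s' = ∑ s, count n s * transfer s s' := calc
  count (n + 1) s' = #{pc : Config n × Hexagon | IsAdmissible pc.1 ∧
      (IsGoodHexagon (state pc.1) pc.2 ∧ nextState (state pc.1) pc.2 = s')} :=
    (card_equiv (snocEquiv n) fun pc => by
      simp [isAdmissible_snocEquiv, state_snocEquiv, and_assoc]).symm
  _ = ∑ s, count n s * transfer s s' :=
    card_filter_prod_eq_sum_card_mul_card IsAdmissible state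
      (fun s c => IsGoodHexagon s c ∧ nextState s c = s')

def transferMatrix : Bool × Bool → Bool × Bool → ℕ
  | (false, true), (true, false) => 2
  | (false, false), (true, false) => 2
  | (true, false), (false, true) => 2
  | (false, true), (false, true) => 2
  | (false, false), (false, true) => 1
  | (false, true), (false, false) => 1
  | (false, false), (false, false) => 1
  | _, _ => 0

theorem transfer_eq_transferMatrix : transfer = transferMatrix := by
  funext ⟨a, b⟩ ⟨a', b'⟩
  cases a <;> cases b <;> cases a' <;> cases b' <;> decide

theorem count_succ_eq (n : ℕ) :
    count (n + 1) (true, false) = 2 * count n (false, true) + 2 * count n (false, false) ∧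
    count (n + 1) (false, true) =
      2 * count n (true, false) + 2 * count n (false, true) + count n (false, false) ∧
    count (n + 1) (false, false) = count n (false, true) + count n (false, false) := by
  simp only [count_succ, Fintype.sum_prod_type, Fintype.sum_bool, transfer_eq_transferMatrix,
    transferMatrix]
  omega

theorem count_zero :
    count 0 (true, false) = 1 ∧ count 0 (false, true) = 0 ∧ count 0 (false, false) = 1 := by
  decide

theorem numIDSOrthoHex_eq_count (n : ℕ) :
    numIDSOrthoHex n = count n (true, false) + count n (false, true) := by
  have hlast : ∀ p : Config n, p.1 (Fin.last n) = !leftNbr p (Fin.last n) ↔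
      state p = (true, false) ∨ state p = (false, true) := by
    intro p
    simp only [state, Prod.mk.injEq]
    cases p.1 (Fin.last n) <;> cases leftNbr p (Fin.last n) <;> simp
  rw [numIDSOrthoHex, Nat.card_congr ((configEquiv n).subtypeEquiv
      (q := fun p => IsAdmissible p ∧ p.1 (Fin.last n) = !leftNbr p (Fin.last n))
      isIndepDomSet_orthoHex_iff), Nat.card_eq_fintype_card, Fintype.card_subtype]
  simp only [hlast, and_or_left, filter_or]
  rw [card_union_of_disjoint]
  · rfl
  · exact disjoint_filter.2 fun p _ h h' => by simp_all

end OrthoHex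

theorem numIDSOrthoHex_add_three (m : ℕ) :
    numIDSOrthoHex (m + 3) = 3 * numIDSOrthoHex (m + 2) + 3 * numIDSOrthoHex (m + 1) := by
  simp only [OrthoHex.numIDSOrthoHex_eq_count]
  have h₀ := OrthoHex.count_succ_eq m
  have h₁ := OrthoHex.count_succ_eq (m + 1)
  have h₂ := OrthoHex.count_succ_eq (m + 2)
  simp only [Nat.add_assoc, Nat.reduceAdd] at h₁ h₂
  omega

/-- `o 1 = 5`, `o 2 = 19`, and `o n = 3·o (n-1) + 3·o (n-2)` for `n ≥ 3`, where
`o n` is the number of independent dominating sets of `O n`. -/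
theorem numIDSOrthoHex_recurrence :
    numIDSOrthoHex 1 = 5 ∧ numIDSOrthoHex 2 = 19 ∧
      ∀ n : ℕ, 3 ≤ n →
        numIDSOrthoHex n = 3 * numIDSOrthoHex (n - 1) + 3 * numIDSOrthoHex (n - 2) := by
  have h₀ := OrthoHex.count_zero
  have h₁ := OrthoHex.count_succ_eq 0
  have h₂ := OrthoHex.count_succ_eq 1
  simp only [Nat.reduceAdd] at h₁ h₂
  refine ⟨?_, ?_, fun n hn => ?_⟩
  · rw [OrthoHex.numIDSOrthoHex_eq_count]; omega
  · rw [OrthoHex.numIDSOrthoHex_eq_count]; omega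
  · obtain ⟨m, rfl⟩ := Nat.exists_eq_add_of_le' hn
    exact numIDSOrthoHex_add_three m
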